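/- arXiv:1301.2243 — 7 statements merged into one kernel-verified Lean document; each statement's English description precedes it below -/
import Mathlib

section
/- Let V be a finite-dimensional complex vector space with endomorphisms d and δ satisfying d ∘ d = 0 and δ ∘ δ = 0, and set □ = d∘δ + δ∘d. If d and δ are disjoint (i.e. ker d ∩ range δ = 0 and ker δ ∩ range d = 0), then V decomposes as the internal direct sum V = range d ⊕ ker □ ⊕ range δ. -/
/-!
Disjointness forces `ker □ = ker d ⊓ ker δ`. With `a = range d`, `c = range δ` and
`k = ker d ⊓ ker δ`, independence of `a, k, c` is then pure modular-lattice algebra, using only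
`a ≤ ker d`, `c ≤ ker δ` and the two disjointness hypotheses. Finally `range □ ≤ a ⊔ c` is
disjoint from `ker □`, so rank–nullity for `□` forces `a ⊔ c ⊔ ker □ = ⊤`.
-/

section ModularLattice

variable {α : Type*} [Lattice α] [OrderBot α] [IsModularLattice α]

theorem inf_sup_eq_left_of_le_of_disjoint {k p c : α} (hkp : k ≤ p) (hpc : Disjoint p c) :
    p ⊓ (k ⊔ c) = k := by
  rw [inf_comm, sup_inf_assoc_of_le c hkp, hpc.symm.eq_bot, sup_bot_eq]

theorem disjoint_sup_of_le_of_disjoint {a k c p q : α} (hap : a ≤ p) (hkp : k ≤ p) (hkq : k ≤ q)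
    (hpc : Disjoint p c) (hqa : Disjoint q a) : Disjoint a (k ⊔ c) := by
  refine disjoint_iff_inf_le.2 (le_trans (le_inf ?_ inf_le_left) hqa.le_bot)
  calc a ⊓ (k ⊔ c) ≤ p ⊓ (k ⊔ c) := inf_le_inf_right _ hap
    _ = k := inf_sup_eq_left_of_le_of_disjoint hkp hpc
    _ ≤ q := hkq

theorem disjoint_sup_of_le_inf_of_disjoint {a k c p q : α} (hap : a ≤ p) (hkp : k ≤ p)
    (hkq : k ≤ q) (hpc : Disjoint p c) (hqa : Disjoint q a) : Disjoint k (a ⊔ c) := by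
  refine disjoint_iff_inf_le.2 (le_trans (le_inf (inf_le_left.trans hkq) ?_) hqa.le_bot)
  calc k ⊓ (a ⊔ c) ≤ p ⊓ (a ⊔ c) := inf_le_inf_right _ hkp
    _ = a := inf_sup_eq_left_of_le_of_disjoint hap hpc

end ModularLattice

theorem iSupIndep_fin_three_of_le_of_disjoint {α : Type*} [CompleteLattice α] [IsModularLattice α]
    {a k c p q : α} (hap : a ≤ p) (hcq : c ≤ q) (hkp : k ≤ p) (hkq : k ≤ q)
    (hpc : Disjoint p c) (hqa : Disjoint q a) : iSupIndep ![a, k, c] :=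
  iSupIndep_fin_three.2
    ⟨disjoint_sup_of_le_of_disjoint hap hkp hkq hpc hqa,
      sup_comm a c ▸ disjoint_sup_of_le_inf_of_disjoint hap hkp hkq hpc hqa,
      sup_comm k a ▸ disjoint_sup_of_le_of_disjoint hcq hkq hkp hqa hpc⟩

namespace LinearMap

theorem ker_comp_add_comp_eq_inf {R V : Type*} [Ring R] [AddCommGroup V] [Module R V]
    {d δ : V →ₗ[R] V} (hd : d ∘ₗ d = 0)
    (h1 : Disjoint (ker d) (range δ)) (h2 : Disjoint (ker δ) (range d)) :
    ker (d ∘ₗ δ + δ ∘ₗ d) = ker d ⊓ ker δ := by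
  refine le_antisymm (fun x hx => ?_) (fun x ⟨hdx, hδx⟩ => by simp_all)
  have hsum : d (δ x) + δ (d x) = 0 := hx
  have hdδ : d (δ x) = 0 := by
    refine Submodule.disjoint_def.1 h1 _ (range_le_ker_iff.2 hd ⟨δ x, rfl⟩) ⟨-d x, ?_⟩
    rw [map_neg, neg_eq_iff_add_eq_zero, add_comm, hsum]
  have hδd : δ (d x) = 0 := by rwa [hdδ, zero_add] at hsum
  exact ⟨Submodule.disjoint_def.1 h2 _ hδd ⟨x, rfl⟩, Submodule.disjoint_def.1 h1 _ hdδ ⟨x, rfl⟩⟩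

theorem sup_ker_eq_top_of_range_le {𝕜 V : Type*} [DivisionRing 𝕜] [AddCommGroup V] [Module 𝕜 V]
    [FiniteDimensional 𝕜 V] {f : V →ₗ[𝕜] V} {W : Submodule 𝕜 V} (hf : range f ≤ W)
    (hW : Disjoint W (ker f)) : W ⊔ ker f = ⊤ := by
  refine Submodule.eq_top_of_disjoint W (ker f) ?_ hW
  rw [← finrank_range_add_finrank_ker f]
  exact Nat.add_le_add_right (Submodule.finrank_mono hf) _

end LinearMap

/-- Hodge-type decomposition: if `d` and `δ` are disjoint, then
`V = range d ⊕ ker □ ⊕ range δ` as an internal direct sum, where `□ = dδ + δd`. -/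
theorem stmt0 (V : Type*) [AddCommGroup V] [Module ℂ V] [FiniteDimensional ℂ V]
    (d δ : V →ₗ[ℂ] V) (hd : d ∘ₗ d = 0) (hδ : δ ∘ₗ δ = 0)
    (h1 : LinearMap.ker d ⊓ LinearMap.range δ = ⊥)
    (h2 : LinearMap.ker δ ⊓ LinearMap.range d = ⊥) :
    DirectSum.IsInternal
      ![LinearMap.range d, LinearMap.ker (d ∘ₗ δ + δ ∘ₗ d), LinearMap.range δ] := by
  have hker := LinearMap.ker_comp_add_comp_eq_inf hd (disjoint_iff.2 h1) (disjoint_iff.2 h2)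
  have hindep : iSupIndep
      ![LinearMap.range d, LinearMap.ker (d ∘ₗ δ + δ ∘ₗ d), LinearMap.range δ] :=
    hker ▸ iSupIndep_fin_three_of_le_of_disjoint (LinearMap.range_le_ker_iff.2 hd)
      (LinearMap.range_le_ker_iff.2 hδ) inf_le_left inf_le_right
      (disjoint_iff.2 h1) (disjoint_iff.2 h2)
  have hrange : LinearMap.range (d ∘ₗ δ + δ ∘ₗ d) ≤ LinearMap.range d ⊔ LinearMap.range δ :=
    (LinearMap.range_add_le _ _).trans
      (sup_le_sup (LinearMap.range_comp_le_range _ _) (LinearMap.range_comp_le_range _ _))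
  have hspan := LinearMap.sup_ker_eq_top_of_range_le hrange
    (sup_comm (LinearMap.range δ) _ ▸ (iSupIndep_fin_three.1 hindep).2.1.symm)
  refine DirectSum.isInternal_submodule_of_iSupIndep_of_iSup_eq_top hindep ?_
  rw [iSup_fin_three]
  rwa [sup_right_comm] at hspan
end

section
/- Let V be a finite-dimensional complex vector space with linear endomorphisms d, δ satisfying d² = 0, δ² = 0, and set □ = dδ + δd. If d and δ are disjoint, then ker d = range d ⊕ ker □ and ker δ = ker □ ⊕ range δ (as internal direct sums of subspaces). -/
/-- if `d` and `δ` are disjoint then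
`ker d = range d ⊕ ker □` and `ker δ = ker □ ⊕ range δ` (internal direct sums). -/
theorem stmt1 (V : Type*) [AddCommGroup V] [Module ℂ V] [FiniteDimensional ℂ V]
    (d δ : V →ₗ[ℂ] V) (hd : d ∘ₗ d = 0) (hδ : δ ∘ₗ δ = 0)
    (h1 : LinearMap.ker d ⊓ LinearMap.range δ = ⊥)
    (h2 : LinearMap.ker δ ⊓ LinearMap.range d = ⊥) :
    (LinearMap.ker d = LinearMap.range d ⊔ LinearMap.ker (d ∘ₗ δ + δ ∘ₗ d) ∧
      Disjoint (LinearMap.range d) (LinearMap.ker (d ∘ₗ δ + δ ∘ₗ d))) ∧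
    (LinearMap.ker δ = LinearMap.ker (d ∘ₗ δ + δ ∘ₗ d) ⊔ LinearMap.range δ ∧
      Disjoint (LinearMap.ker (d ∘ₗ δ + δ ∘ₗ d)) (LinearMap.range δ)) := by
  have hdd : ∀ x, d (d x) = 0 := by
    intro x
    have := LinearMap.ext_iff.mp hd x
    simpa using this
  have hδδ : ∀ x, δ (δ x) = 0 := by
    intro x
    have := LinearMap.ext_iff.mp hδ x
    simpa using this
  -- zero lemmas from disjointness
  have hzero1 : ∀ y, d y = 0 → y ∈ LinearMap.range δ → y = 0 := by
    intro y h hy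
    have : y ∈ LinearMap.ker d ⊓ LinearMap.range δ := ⟨h, hy⟩
    rw [h1] at this
    simpa using this
  have hzero2 : ∀ y, δ y = 0 → y ∈ LinearMap.range d → y = 0 := by
    intro y h hy
    have : y ∈ LinearMap.ker δ ⊓ LinearMap.range d := ⟨h, hy⟩
    rw [h2] at this
    simpa using this
  -- ker □ = ker d ⊓ ker δ
  have hK : LinearMap.ker (d ∘ₗ δ + δ ∘ₗ d) = LinearMap.ker d ⊓ LinearMap.ker δ := by
    apply le_antisymm
    · intro x hx
      have hx0 : d (δ x) + δ (d x) = 0 := by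
        simpa using hx
      have hA : d (δ (d x)) = 0 := by
        have := congrArg d hx0
        simp only [map_add, map_zero] at this
        rw [hdd (δ x)] at this
        simpa using this
      have hA0 : δ (d x) = 0 := hzero1 _ hA ⟨d x, rfl⟩
      have hdx : d x = 0 := hzero2 _ hA0 ⟨x, rfl⟩
      have hdδx : d (δ x) = 0 := by
        rw [hA0, add_zero] at hx0; exact hx0
      have hδx : δ x = 0 := hzero1 _ hdδx ⟨x, rfl⟩
      exact ⟨hdx, hδx⟩
    · intro x hx
      obtain ⟨hx1, hx2⟩ := hx
      simp only [LinearMap.mem_ker, LinearMap.add_apply, LinearMap.comp_apply]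
      rw [hx1, hx2, map_zero, map_zero, add_zero]
  -- d∘δ restricts to an endomorphism of range d
  have hmaps : ∀ x ∈ LinearMap.range d, (d ∘ₗ δ) x ∈ LinearMap.range d :=
    fun x _ => ⟨δ x, rfl⟩
  set f := (d ∘ₗ δ).restrict hmaps with hf
  have hfinj : Function.Injective f := by
    rw [← LinearMap.ker_eq_bot]
    rw [LinearMap.ker_eq_bot']
    intro z hz
    have hz' : d (δ (z : V)) = 0 := by
      have := congrArg (Subtype.val) hz
      simpa [hf, LinearMap.restrict_apply] using this
    have hδz : δ (z : V) = 0 := hzero1 _ hz' ⟨(z : V), rfl⟩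
    have : (z : V) = 0 := hzero2 _ hδz z.2
    exact Subtype.ext this
  have hfsurj : Function.Surjective f :=
    (LinearMap.injective_iff_surjective).mp hfinj
  -- δ∘d restricts to an endomorphism of range δ
  have hmaps' : ∀ x ∈ LinearMap.range δ, (δ ∘ₗ d) x ∈ LinearMap.range δ :=
    fun x _ => ⟨d x, rfl⟩
  set g := (δ ∘ₗ d).restrict hmaps' with hg
  have hginj : Function.Injective g := by
    rw [← LinearMap.ker_eq_bot]
    rw [LinearMap.ker_eq_bot']
    intro z hz
    have hz' : δ (d (z : V)) = 0 := by
      have := congrArg (Subtype.val) hz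
      simpa [hg, LinearMap.restrict_apply] using this
    have hdz : d (z : V) = 0 := hzero2 _ hz' ⟨(z : V), rfl⟩
    have : (z : V) = 0 := hzero1 _ hdz z.2
    exact Subtype.ext this
  have hgsurj : Function.Surjective g :=
    (LinearMap.injective_iff_surjective).mp hginj
  constructor
  · constructor
    · apply le_antisymm
      · intro x hx
        have hx' : d x = 0 := hx
        obtain ⟨z, hz⟩ := hfsurj ⟨d (δ x), ⟨δ x, rfl⟩⟩
        have hz' : d (δ (z : V)) = d (δ x) := by
          have := congrArg (Subtype.val) hz
          simpa [hf, LinearMap.restrict_apply] using this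
        obtain ⟨w, hw⟩ := z.2
        have hdz : d (z : V) = 0 := by rw [← hw]; exact hdd w
        have hdh : d (x - (z : V)) = 0 := by
          rw [map_sub, hx', hdz, sub_zero]
        have hdδh : d (δ (x - (z : V))) = 0 := by
          rw [map_sub, map_sub, hz', sub_self]
        have hδh : δ (x - (z : V)) = 0 := hzero1 _ hdδh ⟨x - (z : V), rfl⟩
        have hmem : x - (z : V) ∈ LinearMap.ker (d ∘ₗ δ + δ ∘ₗ d) := by
          rw [hK]; exact ⟨hdh, hδh⟩
        have : x = (z : V) + (x - (z : V)) := by abel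
        rw [this]
        exact Submodule.add_mem_sup z.2 hmem
      · apply sup_le
        · intro x hx
          obtain ⟨w, hw⟩ := hx
          have : d x = 0 := by rw [← hw]; exact hdd w
          exact this
        · rw [hK]; exact inf_le_left
    · rw [disjoint_iff, hK, eq_bot_iff]
      rintro x hx
      rw [Submodule.mem_inf, Submodule.mem_inf] at hx
      obtain ⟨hx1, -, hx3⟩ := hx
      simpa using hzero2 x hx3 hx1
  · constructor
    · apply le_antisymm
      · intro x hx
        have hx' : δ x = 0 := hx
        obtain ⟨z, hz⟩ := hgsurj ⟨δ (d x), ⟨d x, rfl⟩⟩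
        have hz' : δ (d (z : V)) = δ (d x) := by
          have := congrArg (Subtype.val) hz
          simpa [hg, LinearMap.restrict_apply] using this
        obtain ⟨w, hw⟩ := z.2
        have hδz : δ (z : V) = 0 := by rw [← hw]; exact hδδ w
        have hδh : δ (x - (z : V)) = 0 := by
          rw [map_sub, hx', hδz, sub_zero]
        have hδdh : δ (d (x - (z : V))) = 0 := by
          rw [map_sub, map_sub, hz', sub_self]
        have hdh : d (x - (z : V)) = 0 := hzero2 _ hδdh ⟨x - (z : V), rfl⟩
        have hmem : x - (z : V) ∈ LinearMap.ker (d ∘ₗ δ + δ ∘ₗ d) := by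
          rw [hK]; exact ⟨hdh, hδh⟩
        have : x = (x - (z : V)) + (z : V) := by abel
        rw [this]
        exact Submodule.add_mem_sup hmem z.2
      · apply sup_le
        · rw [hK]; exact inf_le_right
        · intro x hx
          obtain ⟨w, hw⟩ := hx
          have : δ x = 0 := by rw [← hw]; exact hδδ w
          exact this
    · rw [disjoint_iff, hK, eq_bot_iff]
      rintro x hx
      rw [Submodule.mem_inf, Submodule.mem_inf] at hx
      obtain ⟨⟨hx1, -⟩, hx3⟩ := hx
      simpa using hzero1 x hx1 hx3
end

section
/- Let V be a finite-dimensional complex vector space with linear endomorphisms d, δ satisfying d² = 0, δ² = 0, □ = dδ + δd, and suppose d and δ are disjoint. Then the composite ker □ ↪ ker δ ↠ ker δ / range δ is a linear isomorphism; in particular the homology ker δ / im δ is isomorphic to ker □. -/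
/-- if `d` and `δ` are disjoint, the composite
`ker □ ↪ ker δ ↠ ker δ / range δ` is an isomorphism; we express this by saying that
the map `ker □ → V / range δ` (inclusion followed by the quotient map) is injective
and has image exactly the image of `ker δ` in `V / range δ`. -/
theorem stmt2 (V : Type*) [AddCommGroup V] [Module ℂ V] [FiniteDimensional ℂ V]
    (d δ : V →ₗ[ℂ] V) (hd : d ∘ₗ d = 0) (hδ : δ ∘ₗ δ = 0)
    (h1 : LinearMap.ker d ⊓ LinearMap.range δ = ⊥)
    (h2 : LinearMap.ker δ ⊓ LinearMap.range d = ⊥) :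
    Function.Injective
      ((LinearMap.range δ).mkQ ∘ₗ (LinearMap.ker (d ∘ₗ δ + δ ∘ₗ d)).subtype) ∧
    LinearMap.range
        ((LinearMap.range δ).mkQ ∘ₗ (LinearMap.ker (d ∘ₗ δ + δ ∘ₗ d)).subtype) =
      Submodule.map (LinearMap.range δ).mkQ (LinearMap.ker δ) := by
  set B : V →ₗ[ℂ] V := d ∘ₗ δ + δ ∘ₗ d with hB
  have hdd : ∀ x : V, d (d x) = 0 := fun x => LinearMap.congr_fun hd x
  have hδδ : ∀ x : V, δ (δ x) = 0 := fun x => LinearMap.congr_fun hδ x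
  -- zero from intersections
  have zero1 : ∀ z : V, d z = 0 → z ∈ LinearMap.range δ → z = 0 := by
    intro z hz1 hz2
    have : z ∈ LinearMap.ker d ⊓ LinearMap.range δ := ⟨hz1, hz2⟩
    rw [h1, Submodule.mem_bot] at this; exact this
  have zero2 : ∀ z : V, δ z = 0 → z ∈ LinearMap.range d → z = 0 := by
    intro z hz1 hz2
    have : z ∈ LinearMap.ker δ ⊓ LinearMap.range d := ⟨hz1, hz2⟩
    rw [h2, Submodule.mem_bot] at this; exact this
  -- harmonic elements are killed by both d and δ
  have key : ∀ x : V, B x = 0 → d x = 0 ∧ δ x = 0 := by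
    intro x hx
    have hx' : d (δ x) + δ (d x) = 0 := by
      simpa [hB, LinearMap.add_apply, LinearMap.comp_apply] using hx
    have hδd : δ (d x) = 0 := by
      apply zero2
      · exact hδδ (d x)
      · refine ⟨-(δ x), ?_⟩
        rw [map_neg]
        exact neg_eq_of_add_eq_zero_right hx'
    have hdδ : d (δ x) = 0 := by
      have := hx'; rw [hδd, add_zero] at this; exact this
    constructor
    · exact zero2 (d x) hδd ⟨x, rfl⟩
    · exact zero1 (δ x) hdδ ⟨x, rfl⟩
  -- ker B ⊓ range B = ⊥
  have hdisj : LinearMap.ker B ⊓ LinearMap.range B = ⊥ := by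
    rw [Submodule.eq_bot_iff]
    rintro x ⟨hxk, y, rfl⟩
    obtain ⟨hdx, hδx⟩ := key _ hxk
    have hBy : B y = d (δ y) + δ (d y) := by
      simp [hB, LinearMap.add_apply, LinearMap.comp_apply]
    have h5 : δ (d y) = 0 := by
      apply zero1
      · have := hdx; rw [hBy, map_add, hdd, zero_add] at this; exact this
      · exact ⟨d y, rfl⟩
    have h4 : d (δ y) = 0 := by
      apply zero2
      · have := hδx; rw [hBy, map_add, hδδ, add_zero] at this; exact this
      · exact ⟨δ y, rfl⟩
    rw [hBy, h4, h5, add_zero]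
  -- V = ker B ⊔ range B by dimension count
  have hsup : LinearMap.ker B ⊔ LinearMap.range B = ⊤ := by
    apply Submodule.eq_top_of_finrank_eq
    have := Submodule.finrank_sup_add_finrank_inf_eq (LinearMap.ker B) (LinearMap.range B)
    rw [hdisj, finrank_bot, add_zero] at this
    rw [this, add_comm]
    exact LinearMap.finrank_range_add_finrank_ker B
  set f := (LinearMap.range δ).mkQ ∘ₗ (LinearMap.ker B).subtype with hf
  constructor
  · rw [← LinearMap.ker_eq_bot, LinearMap.ker_eq_bot']
    rintro ⟨x, hx⟩ hfx
    have hxr : x ∈ LinearMap.range δ := by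
      have : (LinearMap.range δ).mkQ x = 0 := hfx
      rwa [Submodule.mkQ_apply, Submodule.Quotient.mk_eq_zero] at this
    have hdx : d x = 0 := (key x hx).1
    exact Subtype.ext (zero1 x hdx hxr)
  · apply le_antisymm
    · rintro _ ⟨⟨x, hx⟩, rfl⟩
      exact ⟨x, (key x hx).2, rfl⟩
    · rintro _ ⟨x, hxδ, rfl⟩
      have hx : x ∈ LinearMap.ker B ⊔ LinearMap.range B := hsup ▸ Submodule.mem_top
      obtain ⟨h, hh, w, ⟨y, rfl⟩, rfl⟩ := Submodule.mem_sup.mp hx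
      have hδh : δ h = 0 := (key h hh).2
      have hBy : B y = d (δ y) + δ (d y) := by
        simp [hB, LinearMap.add_apply, LinearMap.comp_apply]
      have hδBy : δ (B y) = 0 := by
        have : δ (h + B y) = 0 := hxδ
        rw [map_add, hδh, zero_add] at this; exact this
      have hdδy : d (δ y) = 0 := by
        apply zero2
        · rw [hBy, map_add, hδδ, add_zero] at hδBy; exact hδBy
        · exact ⟨δ y, rfl⟩
      refine ⟨⟨h, hh⟩, ?_⟩
      show (LinearMap.range δ).mkQ h = (LinearMap.range δ).mkQ (h + B y)
      rw [map_add, left_eq_add, Submodule.mkQ_apply, Submodule.Quotient.mk_eq_zero]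
      rw [hBy, hdδy, zero_add]
      exact ⟨d y, rfl⟩
end

section
/- Let V be a vector space with linear endomorphisms d, δ satisfying d² = 0, δ² = 0, and □ = dδ + δd. If range δ ∩ ker □ = 0 and range d ∩ ker □ = 0, then d and δ are disjoint, i.e. ker d ∩ range δ = 0 and ker δ ∩ range d = 0. -/
/-- if `range δ ⊓ ker □ = 0` and `range d ⊓ ker □ = 0`, then `d` and `δ`
are disjoint. -/
theorem stmt5 (K V : Type*) [Field K] [AddCommGroup V] [Module K V]
    (d δ : V →ₗ[K] V) (hd : d ∘ₗ d = 0) (hδ : δ ∘ₗ δ = 0)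
    (h1 : LinearMap.range δ ⊓ LinearMap.ker (d ∘ₗ δ + δ ∘ₗ d) = ⊥)
    (h2 : LinearMap.range d ⊓ LinearMap.ker (d ∘ₗ δ + δ ∘ₗ d) = ⊥) :
    LinearMap.ker d ⊓ LinearMap.range δ = ⊥ ∧
    LinearMap.ker δ ⊓ LinearMap.range d = ⊥ := by
  constructor
  · apply le_bot_iff.mp
    intro x hx
    obtain ⟨hxd, y, hy⟩ := hx
    rw [← le_bot_iff] at h1
    apply h1
    refine ⟨⟨y, hy⟩, ?_⟩
    show (d ∘ₗ δ + δ ∘ₗ d) x = 0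
    simp only [LinearMap.add_apply, LinearMap.comp_apply]
    have h1' : δ x = 0 := by
      rw [← hy, ← LinearMap.comp_apply, hδ]; rfl
    rw [h1', LinearMap.mem_ker.mp hxd]
    simp
  · apply le_bot_iff.mp
    intro x hx
    obtain ⟨hxd, y, hy⟩ := hx
    rw [← le_bot_iff] at h2
    apply h2
    refine ⟨⟨y, hy⟩, ?_⟩
    show (d ∘ₗ δ + δ ∘ₗ d) x = 0
    simp only [LinearMap.add_apply, LinearMap.comp_apply]
    have h1' : d x = 0 := by
      rw [← hy, ← LinearMap.comp_apply, hd]; rfl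
    rw [h1', LinearMap.mem_ker.mp hxd]
    simp
end

section
/- Let V be a finite-dimensional complex vector space with linear maps d, δ : V → V satisfying d² = 0, δ² = 0, set □ = dδ + δd, and let V₀ be the generalized eigenspace of □ for eigenvalue 0. Then the inclusion ker δ ∩ V₀ ↪ ker δ induces a linear isomorphism (ker δ ∩ V₀)/(range δ ∩ V₀) ≅ ker δ / range δ. -/
/-!
`□ = dδ + δd` commutes with `δ`, so both pieces of the Fitting decomposition `V = V₀ ⊕ A` of `□`
(with `A = ⋂ₙ range □ⁿ`) are `δ`-invariant, and every `δ`-cycle splits into a cycle in `V₀` and a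
cycle in `A`. On `A` the operator `□` is invertible; if `x ∈ A` is a cycle, write `x = □z` with
`z ∈ A`: then `□(δz) = δx = 0` forces `δz = 0`, hence `x = □z = δ(dz)` is a boundary.
-/

open LinearMap Submodule

section Fitting

variable {R M : Type*} [Ring R] [AddCommGroup M] [Module R M] {f g : Module.End R M}

lemma Commute.iSup_ker_pow_le_comap (h : Commute f g) :
    ⨆ n : ℕ, ker (f ^ n) ≤ (⨆ n : ℕ, ker (f ^ n)).comap g := by
  refine iSup_le fun n x hx => mem_iSup_of_mem n ?_
  rw [mem_ker, ← Module.End.mul_apply, (h.pow_left n).eq, Module.End.mul_apply, mem_ker.1 hx,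
    map_zero]

lemma Commute.iInf_range_pow_le_comap (h : Commute f g) :
    ⨅ n : ℕ, range (f ^ n) ≤ (⨅ n : ℕ, range (f ^ n)).comap g := by
  refine fun x hx => mem_iInf _ |>.2 fun n => ?_
  obtain ⟨y, rfl⟩ := mem_iInf _ |>.1 hx n
  exact ⟨g y, by rw [← Module.End.mul_apply, (h.pow_left n).eq, Module.End.mul_apply]⟩

lemma exists_apply_eq_of_mem_iInf_range_pow [IsArtinian R M] {x : M}
    (hx : x ∈ ⨅ n : ℕ, range (f ^ n)) : ∃ z ∈ ⨅ n : ℕ, range (f ^ n), f z = x := by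
  obtain ⟨n, hn⟩ := Filter.eventually_atTop.1 f.eventually_iInf_range_pow_eq
  obtain ⟨w, rfl⟩ := mem_iInf _ |>.1 hx (n + 1)
  refine ⟨(f ^ n) w, hn n le_rfl ▸ mem_range_self _ w, ?_⟩
  rw [pow_succ', Module.End.mul_apply]

lemma disjoint_ker_iInf_range_pow [IsNoetherian R M] [IsArtinian R M] (f : Module.End R M) :
    Disjoint (ker f) (⨅ n : ℕ, range (f ^ n)) :=
  (isCompl_iSup_ker_pow_iInf_range_pow f).disjoint.mono_left <|
    le_iSup_of_le 1 (by rw [pow_one])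

lemma IsCompl.ker_le_sup_of_le_comap {p q : Submodule R M} (hpq : IsCompl p q)
    (hp : p ≤ p.comap g) (hq : q ≤ q.comap g) : ker g ≤ ker g ⊓ p ⊔ ker g ⊓ q := by
  intro x hx
  obtain ⟨a, ha, b, hb, rfl⟩ := mem_sup.1 (hpq.sup_eq_top ▸ mem_top : x ∈ p ⊔ q)
  have hgab : g a = -g b := eq_neg_of_add_eq_zero_left (by rwa [← map_add])
  have hgb : g b = 0 := by
    refine (mem_bot R).1 <| hpq.disjoint.eq_bot ▸ mem_inf.2 ⟨?_, hq hb⟩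
    simpa [hgab] using neg_mem (hp ha)
  have hga : g a = 0 := by rw [hgab, hgb, neg_zero]
  exact add_mem_sup ⟨hga, ha⟩ ⟨hgb, hb⟩

end Fitting

section Laplacian

variable {R M : Type*} [Ring R] [AddCommGroup M] [Module R M] {d δ : Module.End R M}

lemma commute_comp_add_comp (hδ : δ ∘ₗ δ = 0) : Commute δ (d ∘ₗ δ + δ ∘ₗ d) := by
  have h : δ * δ = 0 := hδ
  have h' : ∀ a : Module.End R M, δ * (δ * a) = 0 := fun a => by rw [← mul_assoc, h, zero_mul]
  show δ * (d * δ + δ * d) = (d * δ + δ * d) * δ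
  simp [mul_add, add_mul, mul_assoc, h, h']

lemma map_comp_add_comp_ker_le_range : (ker δ).map (d ∘ₗ δ + δ ∘ₗ d) ≤ range δ := by
  rintro - ⟨z, hz, rfl⟩
  exact ⟨d z, by simp [mem_ker.1 hz]⟩

lemma ker_inf_iInf_range_pow_le_range [IsNoetherian R M] [IsArtinian R M] {L : Module.End R M}
    (hcomm : Commute δ L) (hL : (ker δ).map L ≤ range δ) :
    ker δ ⊓ ⨅ n : ℕ, range (L ^ n) ≤ range δ := by
  rintro x ⟨hx, hxA⟩
  obtain ⟨z, hzA, rfl⟩ := exists_apply_eq_of_mem_iInf_range_pow hxA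
  have hδz : δ z = 0 := by
    have hLδz : L (δ z) = 0 := by
      rw [← Module.End.mul_apply, ← hcomm.eq, Module.End.mul_apply]; exact hx
    exact (mem_bot R).1 <| (disjoint_ker_iInf_range_pow L).eq_bot ▸
      mem_inf.2 ⟨hLδz, hcomm.symm.iInf_range_pow_le_comap hzA⟩
  exact hL ⟨z, hδz, rfl⟩

end Laplacian

theorem stmt8_general (V : Type*) [AddCommGroup V] [Module ℂ V] [FiniteDimensional ℂ V]
    (d δ : Module.End ℂ V) (hδ : δ ∘ₗ δ = 0) :
    LinearMap.ker ((LinearMap.range δ).mkQ ∘ₗ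
        (LinearMap.ker δ ⊓ ⨆ n : ℕ, LinearMap.ker ((d ∘ₗ δ + δ ∘ₗ d) ^ n)).subtype) =
      Submodule.comap
        (LinearMap.ker δ ⊓ ⨆ n : ℕ, LinearMap.ker ((d ∘ₗ δ + δ ∘ₗ d) ^ n)).subtype
        (LinearMap.range δ ⊓ ⨆ n : ℕ, LinearMap.ker ((d ∘ₗ δ + δ ∘ₗ d) ^ n)) ∧
    LinearMap.range ((LinearMap.range δ).mkQ ∘ₗ
        (LinearMap.ker δ ⊓ ⨆ n : ℕ, LinearMap.ker ((d ∘ₗ δ + δ ∘ₗ d) ^ n)).subtype) =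
      Submodule.map (LinearMap.range δ).mkQ (LinearMap.ker δ) := by
  set L := d ∘ₗ δ + δ ∘ₗ d
  set V₀ := ⨆ n : ℕ, ker (L ^ n)
  have hcomm : Commute δ L := commute_comp_add_comp hδ
  have hsplit : ker δ = ker δ ⊓ V₀ ⊔ range δ := by
    refine le_antisymm ?_ (sup_le inf_le_left (range_le_ker_iff.2 hδ))
    refine (isCompl_iSup_ker_pow_iInf_range_pow L).ker_le_sup_of_le_comap
      hcomm.symm.iSup_ker_pow_le_comap hcomm.symm.iInf_range_pow_le_comap |>.trans ?_
    exact sup_le_sup_left (ker_inf_iInf_range_pow_le_range hcomm map_comp_add_comp_ker_le_range) _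
  constructor
  · ext ⟨x, hx⟩
    simpa using fun _ _ => hx.2
  · rw [range_comp, range_subtype]
    conv_rhs => rw [hsplit, Submodule.map_sup, mkQ_map_self, sup_bot_eq]

/-- the inclusion `ker δ ∩ V₀ ↪ ker δ` induces an isomorphism
`(ker δ ∩ V₀)/(range δ ∩ V₀) ≅ ker δ / range δ`; we express this by saying that the
map `q : ker δ ∩ V₀ → V / range δ` has kernel `range δ ∩ V₀` (pulled back) and image
exactly the image of `ker δ` in `V / range δ`. Here `□ = dδ + δd` and `V₀` is its
generalized 0-eigenspace. -/
theorem stmt8 (V : Type*) [AddCommGroup V] [Module ℂ V] [FiniteDimensional ℂ V]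
    (d δ : Module.End ℂ V) (hd : d ∘ₗ d = 0) (hδ : δ ∘ₗ δ = 0) :
    LinearMap.ker ((LinearMap.range δ).mkQ ∘ₗ
        (LinearMap.ker δ ⊓ ⨆ n : ℕ, LinearMap.ker ((d ∘ₗ δ + δ ∘ₗ d) ^ n)).subtype) =
      Submodule.comap
        (LinearMap.ker δ ⊓ ⨆ n : ℕ, LinearMap.ker ((d ∘ₗ δ + δ ∘ₗ d) ^ n)).subtype
        (LinearMap.range δ ⊓ ⨆ n : ℕ, LinearMap.ker ((d ∘ₗ δ + δ ∘ₗ d) ^ n)) ∧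
    LinearMap.range ((LinearMap.range δ).mkQ ∘ₗ
        (LinearMap.ker δ ⊓ ⨆ n : ℕ, LinearMap.ker ((d ∘ₗ δ + δ ∘ₗ d) ^ n)).subtype) =
      Submodule.map (LinearMap.range δ).mkQ (LinearMap.ker δ) :=
  stmt8_general V d δ hδ
end

section
/- Let V be a vector space with linear maps d, δ : V → V satisfying d² = 0 and δ² = 0, set □̃ = dδ + δd and W = range δ. Suppose the restriction of □̃ to W is bijective (note □̃(W) ⊆ W since □̃δ = δ□̃), and let Q : W → V be its inverse, so □̃(Qw) = w and Q(□̃w) = w for all w ∈ W, with Q(W) ⊆ W. Define Π = id − d∘Q∘δ − Q∘δ∘d (well-defined since δ(V) ⊆ W and δd(V) ⊆ W). Then: (a) δ∘Π = 0; (b) Π∘δ = 0; (c) Π∘d = d∘Π; (d) Π∘Π = Π; (e) for every x ∈ ker δ, x − Π(x) ∈ range δ. -/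
/-- the splitting operator `Π = id − d∘Q∘δ − Q∘δ∘d`, where `Q` inverts
`□̃ = dδ + δd` on `W = range δ`, satisfies (a) `δΠ = 0`, (b) `Πδ = 0`, (c) `Πd = dΠ`,
(d) `Π² = Π`, (e) `x − Πx ∈ range δ` for every `x ∈ ker δ`. -/
theorem stmt11 (V : Type*) [AddCommGroup V] [Module ℂ V]
    (d δ Q : V →ₗ[ℂ] V) (hd : d ∘ₗ d = 0) (hδ : δ ∘ₗ δ = 0)
    (hQ1 : ∀ w ∈ LinearMap.range δ, (d ∘ₗ δ + δ ∘ₗ d) (Q w) = w)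
    (hQ2 : ∀ w ∈ LinearMap.range δ, Q ((d ∘ₗ δ + δ ∘ₗ d) w) = w)
    (hQW : ∀ w ∈ LinearMap.range δ, Q w ∈ LinearMap.range δ)
    (P : V →ₗ[ℂ] V)
    (hP : P = LinearMap.id - d ∘ₗ Q ∘ₗ δ - Q ∘ₗ δ ∘ₗ d) :
    δ ∘ₗ P = 0 ∧ P ∘ₗ δ = 0 ∧ P ∘ₗ d = d ∘ₗ P ∧ P ∘ₗ P = P ∧
      ∀ x ∈ LinearMap.ker δ, x - P x ∈ LinearMap.range δ := by
  have hδδ : ∀ x, δ (δ x) = 0 := fun x => LinearMap.congr_fun hδ x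
  have hdd : ∀ x, d (d x) = 0 := fun x => LinearMap.congr_fun hd x
  have hδQ : ∀ w ∈ LinearMap.range δ, δ (Q w) = 0 := by
    intro w hw
    obtain ⟨y, hy⟩ := hQW w hw
    rw [← hy]; exact hδδ y
  -- key: δ(d(Q(δx))) = δx
  have key : ∀ x, δ (d (Q (δ x))) = δ x := by
    intro x
    have h := hQ1 (δ x) ⟨x, rfl⟩
    simp only [LinearMap.add_apply, LinearMap.comp_apply] at h
    rw [hδQ (δ x) ⟨x, rfl⟩, map_zero, zero_add] at h
    exact h
  have hPx : ∀ x, P x = x - d (Q (δ x)) - Q (δ (d x)) := by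
    intro x
    simp [hP, LinearMap.sub_apply, LinearMap.comp_apply]
  have ha : ∀ x, δ (P x) = 0 := by
    intro x
    rw [hPx, map_sub, map_sub, key, hδQ (δ (d x)) ⟨d x, rfl⟩]
    abel
  have hb : ∀ x, P (δ x) = 0 := by
    intro x
    have h := hQ2 (δ x) ⟨x, rfl⟩
    simp only [LinearMap.add_apply, LinearMap.comp_apply] at h
    rw [hδδ x, map_zero, zero_add] at h
    rw [hPx, hδδ x, map_zero, map_zero, h]
    abel
  have hc : ∀ x, P (d x) = d (P x) := by
    intro x
    rw [hPx, hPx, hdd x, map_sub, map_sub, hdd (Q (δ x))]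
    simp
  refine ⟨?_, ?_, ?_, ?_, ?_⟩
  · ext x; simpa using ha x
  · ext x; simpa using hb x
  · ext x; simpa using hc x
  · ext x
    simp only [LinearMap.comp_apply]
    rw [hPx (P x), ha x, ← hc x, ha (d x)]
    simp
  · intro x hx
    have hx0 : δ x = 0 := hx
    rw [hPx, hx0, map_zero, map_zero]
    have : x - (x - 0 - Q (δ (d x))) = Q (δ (d x)) := by abel
    rw [this]
    exact hQW _ ⟨d x, rfl⟩
end

section
/- Let V be a finite-dimensional complex vector space with d, δ : V → V, d² = 0, δ² = 0, □ = dδ + δd. If d and δ are disjoint and □ restricted to ker □ is zero (trivially true), then range □ = range d ⊕ range δ (internal direct sum), and □ maps range d into range d and range δ into range δ bijectively. -/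
/-- Auxiliary: `□ = dδ + δd` is a bijection from `range d` to itself. -/
lemma stmt17_aux (V : Type*) [AddCommGroup V] [Module ℂ V] [FiniteDimensional ℂ V]
    (d δ : V →ₗ[ℂ] V) (hd : d ∘ₗ d = 0)
    (h1 : LinearMap.ker d ⊓ LinearMap.range δ = ⊥)
    (h2 : LinearMap.ker δ ⊓ LinearMap.range d = ⊥) :
    Set.BijOn (d ∘ₗ δ + δ ∘ₗ d) (LinearMap.range d : Set V)
      (LinearMap.range d : Set V) := by
  set B := d ∘ₗ δ + δ ∘ₗ d with hB
  have hdd : ∀ x, d (d x) = 0 := fun x => by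
    simpa using LinearMap.ext_iff.mp hd x
  have hBd : ∀ a, B (d a) = d (δ (d a)) := fun a => by
    simp [hB, hdd a]
  have hmaps : ∀ x ∈ LinearMap.range d, B x ∈ LinearMap.range d := by
    rintro x ⟨a, rfl⟩
    exact ⟨δ (d a), (hBd a).symm⟩
  have hinj : ∀ x ∈ LinearMap.range d, B x = 0 → x = 0 := by
    rintro x ⟨a, rfl⟩ hx
    have hBx : d (δ (d a)) = 0 := by rw [← hBd a]; exact hx
    have hδda : δ (d a) = 0 := by
      have hm : δ (d a) ∈ LinearMap.ker d ⊓ LinearMap.range δ :=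
        ⟨LinearMap.mem_ker.mpr hBx, ⟨d a, rfl⟩⟩
      simpa [h1] using hm
    have hm : d a ∈ LinearMap.ker δ ⊓ LinearMap.range d :=
      ⟨LinearMap.mem_ker.mpr hδda, ⟨a, rfl⟩⟩
    simpa [h2] using hm
  -- restricted map
  have hmaps' : ∀ x ∈ LinearMap.range d, B x ∈ LinearMap.range d := hmaps
  let Br : LinearMap.range d →ₗ[ℂ] LinearMap.range d := B.restrict hmaps'
  have hBrinj : Function.Injective Br := by
    rw [← LinearMap.ker_eq_bot, eq_bot_iff]
    rintro ⟨x, hx⟩ hxk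
    have : B x = 0 := by
      have := LinearMap.mem_ker.mp hxk
      exact congrArg Subtype.val this
    exact Submodule.mk_eq_zero _ _ |>.mpr (hinj x hx this)
  have hBrsurj : Function.Surjective Br :=
    (LinearMap.injective_iff_surjective).mp hBrinj
  refine ⟨hmaps, ?_, ?_⟩
  · intro x hx y hy hxy
    have hs : x - y ∈ LinearMap.range d := Submodule.sub_mem _ hx hy
    have : B (x - y) = 0 := by rw [map_sub, hxy, sub_self]
    exact sub_eq_zero.mp (hinj _ hs this)
  · intro y hy
    obtain ⟨⟨x, hx⟩, hxy⟩ := hBrsurj ⟨y, hy⟩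
    exact ⟨x, hx, congrArg Subtype.val hxy⟩

/-- if `d` and `δ` are disjoint, then
`range □ = range d ⊕ range δ` (internal direct sum), and `□` maps `range d` into
`range d` and `range δ` into `range δ` bijectively. -/
theorem stmt17 (V : Type*) [AddCommGroup V] [Module ℂ V] [FiniteDimensional ℂ V]
    (d δ : V →ₗ[ℂ] V) (hd : d ∘ₗ d = 0) (hδ : δ ∘ₗ δ = 0)
    (h1 : LinearMap.ker d ⊓ LinearMap.range δ = ⊥)
    (h2 : LinearMap.ker δ ⊓ LinearMap.range d = ⊥) :
    LinearMap.range (d ∘ₗ δ + δ ∘ₗ d) = LinearMap.range d ⊔ LinearMap.range δ ∧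
    LinearMap.range d ⊓ LinearMap.range δ = ⊥ ∧
    Set.BijOn (d ∘ₗ δ + δ ∘ₗ d) (LinearMap.range d : Set V)
      (LinearMap.range d : Set V) ∧
    Set.BijOn (d ∘ₗ δ + δ ∘ₗ d) (LinearMap.range δ : Set V)
      (LinearMap.range δ : Set V) := by
  have hdd : ∀ x, d (d x) = 0 := fun x => by simpa using LinearMap.ext_iff.mp hd x
  have hδδ : ∀ x, δ (δ x) = 0 := fun x => by simpa using LinearMap.ext_iff.mp hδ x
  have bijd := stmt17_aux V d δ hd h1 h2
  have bijδ' := stmt17_aux V δ d hδ h2 h1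
  have hcomm : δ ∘ₗ d + d ∘ₗ δ = d ∘ₗ δ + δ ∘ₗ d := add_comm _ _
  have bijδ : Set.BijOn (d ∘ₗ δ + δ ∘ₗ d) (LinearMap.range δ : Set V)
      (LinearMap.range δ : Set V) := by rwa [hcomm] at bijδ'
  have hinter : LinearMap.range d ⊓ LinearMap.range δ = ⊥ := by
    rw [eq_bot_iff]
    rintro x ⟨⟨a, ha⟩, ⟨b, hb⟩⟩
    have hxk : x ∈ LinearMap.ker d := LinearMap.mem_ker.mpr (by rw [← ha]; exact hdd a)
    have hm : x ∈ LinearMap.ker d ⊓ LinearMap.range δ := ⟨hxk, ⟨b, hb⟩⟩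
    simpa [h1] using hm
  refine ⟨?_, hinter, bijd, bijδ⟩
  apply le_antisymm
  · rintro _ ⟨v, rfl⟩
    have : (d ∘ₗ δ + δ ∘ₗ d) v = d (δ v) + δ (d v) := by simp
    rw [this]
    exact Submodule.add_mem _ (Submodule.mem_sup_left ⟨δ v, rfl⟩)
      (Submodule.mem_sup_right ⟨d v, rfl⟩)
  · apply sup_le
    · rintro y hy
      obtain ⟨x, _, hxy⟩ := bijd.surjOn hy
      exact ⟨x, hxy⟩
    · rintro y hy
      obtain ⟨x, _, hxy⟩ := bijδ.surjOn hy
      exact ⟨x, hxy⟩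
end
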